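/- arXiv:1508.01300 — 2 statements merged into one kernel-verified Lean document; each statement's English description precedes it below -/
import Mathlib

section
/- (Proposition 2.5) For every port-numbered graph of diameter D, with level of symmetry λ and with Λ defined as the smallest t such that Π_t = Π_{t+1}, it holds that Λ ≤ D + λ. -/
/-- A port-numbered graph on vertex type `V`: a finite connected simple graph in which,
at every vertex `v` of degree `deg v`, the incident edges are labeled by distinct port
numbers `0, …, deg v - 1`.  `next v i = some (u, j)` means that the edge with port
number `i` at `v` leads to the vertex `u`, at which it has port number `j`. -/
structure PortGraph (V : Type*) [Fintype V] where
  /-- the degree of each vertex -/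
  deg : V → ℕ
  /-- `next v i = some (u, j)` iff the edge with port `i` at `v` has `u` as its other
  endpoint, where it carries port number `j` -/
  next : V → ℕ → Option (V × ℕ)
  /-- exactly the ports `0, …, deg v - 1` are present at `v` -/
  next_isSome : ∀ v i, (next v i).isSome ↔ i < deg v
  /-- the port labeling is consistent at the two endpoints of every edge -/
  next_symm : ∀ v i u j, next v i = some (u, j) → next u j = some (v, i)
  /-- no self-loops -/
  next_ne : ∀ v i u j, next v i = some (u, j) → u ≠ v
  /-- no multiple edges: distinct ports at `v` lead to distinct neighbors -/
  next_inj : ∀ v i i' u j j', next v i = some (u, j) → next v i' = some (u, j') → i = i'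
  /-- the graph is connected -/
  connected : ∀ u v : V, Relation.ReflTransGen (fun a b => ∃ i j, next a i = some (b, j)) u v

namespace PortGraph

variable {V : Type*} [Fintype V]

/-- `P.viewEq t u v` means that the views of `u` and `v` truncated at depth `t` are equal:
`V^t(u) = V^t(v)`. -/
def viewEq (P : PortGraph V) : ℕ → V → V → Prop
  | 0, u, v => P.deg u = P.deg v
  | t + 1, u, v =>
      P.deg u = P.deg v ∧
        ∀ (i j j' : ℕ) (u' v' : V),
          P.next u i = some (u', j) → P.next v i = some (v', j') →
          j = j' ∧ viewEq P t u' v'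

/-- `P.ViewEq u v` means that the (infinite) views of `u` and `v` are equal:
`V(u) = V(v)`, i.e. `V^t(u) = V^t(v)` for every `t`. -/
def ViewEq (P : PortGraph V) (u v : V) : Prop := ∀ t, P.viewEq t u v

end PortGraph

namespace PortGraph

variable {V : Type*} [Fintype V]

/-- adjacency relation of a port-numbered graph -/
def Adj (P : PortGraph V) (a b : V) : Prop := ∃ i j, P.next a i = some (b, j)

/-- the underlying simple graph of a port-numbered graph -/
def toSimpleGraph (P : PortGraph V) : SimpleGraph V where
  Adj := P.Adj
  symm := by
    constructor
    rintro a b ⟨i, j, h⟩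
    exact ⟨j, i, P.next_symm a i b j h⟩
  loopless := by
    constructor
    rintro a ⟨i, j, h⟩
    exact P.next_ne a i a j h rfl

/-- `P.IsDiameter D` means that the diameter of `P` (the maximum distance between two
vertices) equals `D`. -/
def IsDiameter (P : PortGraph V) (D : ℕ) : Prop :=
  (∀ u v : V, P.toSimpleGraph.dist u v ≤ D) ∧ ∃ u v : V, P.toSimpleGraph.dist u v = D

end PortGraph

namespace PortGraph

variable {V : Type*} [Fintype V]

/-- `P.SymAt t` holds if there is a vertex `v` with
`{u : V^t(u) = V^t(v)} = {u : V(u) = V(v)}`.  The level of symmetry of `P` is the least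
such `t`. -/
def SymAt (P : PortGraph V) (t : ℕ) : Prop :=
  ∃ v : V, ∀ u : V, P.viewEq t u v ↔ P.ViewEq u v

end PortGraph

/-!
Fix a vertex `c` witnessing the level of symmetry `λ`: `V^λ(w) = V^λ(c)` already forces
`V(w) = V(c)`. If `V^{λ+k}(u) = V^{λ+k}(v)` and a walk of length `k` leads from `u` to `c`, then
following the same ports from `v` reaches a vertex whose depth-`λ` view, hence whose full view,
is that of `c`. Walking back, the full view of a neighbour together with the port pair of the
connecting edge determines the full view, so `V(u) = V(v)`. Since `k ≤ D` can always be
arranged, `Π_{D+λ} = Π`, and in particular `Π_{D+λ} = Π_{D+λ+1}`.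
-/

namespace PortGraph

variable {V : Type*} [Fintype V] (P : PortGraph V)

theorem viewEq_symm : ∀ (t : ℕ) {u v : V}, P.viewEq t u v → P.viewEq t v u
  | 0, _, _, h => h.symm
  | t + 1, _, _, ⟨hdeg, hnext⟩ => ⟨hdeg.symm, fun i j j' _ _ hv hu => by
      obtain ⟨hj, h⟩ := hnext i j' j _ _ hu hv
      exact ⟨hj.symm, viewEq_symm t h⟩⟩

theorem viewEq_of_viewEq_succ : ∀ (t : ℕ) {u v : V}, P.viewEq (t + 1) u v → P.viewEq t u v
  | 0, _, _, h => h.1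
  | t + 1, _, _, ⟨hdeg, hnext⟩ => ⟨hdeg, fun i j j' _ _ hu hv => by
      obtain ⟨hj, h⟩ := hnext i j j' _ _ hu hv
      exact ⟨hj, viewEq_of_viewEq_succ t h⟩⟩

theorem viewEq_of_le {s t : ℕ} (hst : s ≤ t) {u v : V} (h : P.viewEq t u v) :
    P.viewEq s u v := by
  induction t, hst using Nat.le_induction with
  | base => exact h
  | succ t _ ih => exact ih (P.viewEq_of_viewEq_succ t h)

variable {P}

theorem ViewEq.symm {u v : V} (h : P.ViewEq u v) : P.ViewEq v u :=
  fun t => P.viewEq_symm t (h t)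

theorem exists_next_of_viewEq_succ {t i j : ℕ} {u u' v : V} (h : P.viewEq (t + 1) u v)
    (hu : P.next u i = some (u', j)) :
    ∃ v', P.next v i = some (v', j) ∧ P.viewEq t u' v' := by
  obtain ⟨hdeg, hnext⟩ := h
  have hi : i < P.deg v := hdeg ▸ (P.next_isSome u i).mp (by simp [hu])
  obtain ⟨⟨v', j'⟩, hv⟩ := Option.isSome_iff_exists.mp ((P.next_isSome v i).mpr hi)
  obtain ⟨rfl, h'⟩ := hnext i j j' u' v' hu hv
  exact ⟨v', hv, h'⟩

theorem ViewEq.exists_next {i j : ℕ} {u u' v : V} (h : P.ViewEq u v)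
    (hu : P.next u i = some (u', j)) :
    ∃ v', P.next v i = some (v', j) ∧ P.ViewEq u' v' := by
  obtain ⟨v', hv, -⟩ := exists_next_of_viewEq_succ (h 1) hu
  refine ⟨v', hv, fun t => ?_⟩
  obtain ⟨v'', hv'', h''⟩ := exists_next_of_viewEq_succ (h (t + 1)) hu
  obtain rfl : v'' = v' := by simp_all
  exact h''

theorem ViewEq.of_next {i j : ℕ} {u u' v v' : V} (hu : P.next u i = some (u', j))
    (hv : P.next v i = some (v', j)) (h : P.ViewEq u' v') : P.ViewEq u v := by
  obtain ⟨w, hw, hw'⟩ := h.exists_next (P.next_symm u i u' j hu)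
  obtain rfl : w = v := by simp_all [P.next_symm v i v' j hv]
  exact hw'

variable (P) in
theorem reachable (u v : V) : P.toSimpleGraph.Reachable u v :=
  (SimpleGraph.reachable_iff_reflTransGen u v).mpr (P.connected u v)

theorem viewEq_of_walk {t : ℕ} {c : V} (hc : ∀ w, P.viewEq t w c → P.ViewEq w c) {u v : V}
    (p : P.toSimpleGraph.Walk u c) (h : P.viewEq (t + p.length) u v) : P.ViewEq u v := by
  induction p generalizing v with
  | nil => exact (hc v (P.viewEq_symm t h)).symm
  | cons hadj p ih =>
    obtain ⟨i, j, hu⟩ := hadj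
    obtain ⟨v', hv, h'⟩ := exists_next_of_viewEq_succ h hu
    exact ViewEq.of_next hu hv (ih hc h')

theorem viewEq_succ_iff_of_symAt {t D : ℕ} (hsym : P.SymAt t)
    (hD : ∀ u v : V, P.toSimpleGraph.dist u v ≤ D) (u v : V) :
    P.viewEq (D + t) u v ↔ P.viewEq (D + t + 1) u v := by
  obtain ⟨c, hc⟩ := hsym
  refine ⟨fun h => ?_, P.viewEq_of_viewEq_succ _⟩
  obtain ⟨p, hp⟩ := (P.reachable u c).exists_walk_length_eq_dist
  have hlen : t + p.length ≤ D + t := by have := hD u c; omega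
  exact viewEq_of_walk (fun w => (hc w).mp) p (P.viewEq_of_le hlen h) _

end PortGraph

/-- (Proposition 2.5) For every port-numbered graph of diameter `D`, with level of
symmetry `λ`, and with `Λ` the smallest `t` such that `Π_t = Π_{t+1}`, it holds that
`Λ ≤ D + λ`. -/
theorem Lambda_le_diam_add_levelOfSymmetry {V : Type*} [Fintype V] (P : PortGraph V)
    (D lam Lam : ℕ) (hD : P.IsDiameter D)
    (hlam : IsLeast {t : ℕ | P.SymAt t} lam)
    (hLam : IsLeast {t : ℕ | ∀ u v : V, P.viewEq t u v ↔ P.viewEq (t + 1) u v} Lam) :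
    Lam ≤ D + lam :=
  hLam.2 (P.viewEq_succ_iff_of_symAt hlam.1 hD.1)
end

section
/- (Lemma 3.1, existential form) For every integer λ ≥ 1 there exists a port numbering of the complete graph on 2^{λ+1} vertices such that in the resulting port-numbered clique all vertices have pairwise distinct views at depth λ (in particular all infinite views are pairwise distinct), while no vertex has a unique view at depth λ−1 (for every vertex v there is a vertex u ≠ v with V^{λ−1}(u) = V^{λ−1}(v)). Hence this clique has level of symmetry exactly λ. -/
/-!
Take the vertices to be the bit strings of length `λ + 1`. For each nonzero code `c` the
edges `x — x ^^^ c` form a perfect matching, except for the special codes `2 ^ k` and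
`3 * 2 ^ k` with `k + 2 ≤ λ`, whose matching uses one of these two masks according to bit
`k + 2` of `x`. Together the matchings partition the edges of the clique. Port `i` of `x`
carries code `i + 1`, except that the plain codes `c` and `c ^^^ (x % 4)` trade places.

Agreement of the lowest `n + 1` bits of two vertices is inherited, on the lowest `n` bits,
by their neighbours through any port. The return ports reveal `x % 4` at depth `1`, and
the special code `2 ^ k` xors bit `k + 2` of a vertex into bit `k + 1` of its neighbour.
By induction, `V^t(u) = V^t(v)` iff `u ≡ v [MOD 2 ^ (t + 1)]` for `1 ≤ t ≤ λ`. Views at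
depth `λ` therefore separate all vertices, while `v` and `v ^^^ 2 ^ λ` agree at
depth `λ - 1`.
-/

namespace PortGraph

variable {V : Type*} [Fintype V] (P : PortGraph V)

theorem viewEq_refl : ∀ (t : ℕ) (v : V), P.viewEq t v v
  | 0, _ => rfl
  | t + 1, _ => ⟨rfl, fun _ _ _ u' _ h h' => by
      obtain ⟨rfl, rfl⟩ := Prod.mk.inj (Option.some.inj (h.symm.trans h'))
      exact ⟨rfl, viewEq_refl t u'⟩⟩

theorem viewEq_of_succ : ∀ {t : ℕ} {u v : V}, P.viewEq (t + 1) u v → P.viewEq t u v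
  | 0, _, _, h => h.1
  | _ + 1, _, _, h => ⟨h.1, fun i j j' u' v' hu hv =>
      ⟨(h.2 i j j' u' v' hu hv).1, viewEq_of_succ (h.2 i j j' u' v' hu hv).2⟩⟩

theorem isLeast_symAt {lam : ℕ} [Nonempty V] (hsep : ∀ u v, P.viewEq lam u v → u = v)
    (htwin : ∀ v, ∃ u, u ≠ v ∧ P.viewEq (lam - 1) u v) :
    IsLeast {t | P.SymAt t} lam := by
  refine ⟨⟨Classical.arbitrary V, fun u => ⟨fun h => ?_, fun h => h lam⟩⟩, ?_⟩
  · obtain rfl := hsep _ _ h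
    exact fun t => P.viewEq_refl t _
  · rintro s ⟨v, hv⟩
    by_contra! hs
    obtain ⟨u, hne, hu⟩ := htwin v
    exact hne (hsep u v ((hv u).1 (P.viewEq_of_le (by omega) hu) lam))

end PortGraph

/-- Perfect matchings `step c` (`c ≠ 0`) partitioning the edges of the complete graph on
`Fin N`, with an involutive relabelling of the codes at every vertex. -/
structure CliqueFactorization (N : ℕ) [NeZero N] where
  step : Fin N → Fin N → Fin N
  relabel : Fin N → Fin N → Fin N
  step_zero : ∀ x, step 0 x = x
  step_involutive : ∀ c, Function.Involutive (step c)
  step_left_injective : ∀ x, Function.Injective (step · x)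
  relabel_involutive : ∀ x, Function.Involutive (relabel x)
  relabel_zero : ∀ x, relabel x 0 = 0

namespace CliqueFactorization

variable {N : ℕ} [NeZero N] (F : CliqueFactorization N)

def neighbor (x s : Fin N) : Fin N := F.step (F.relabel x s) x

def returnSlot (x s : Fin N) : Fin N := F.relabel (F.neighbor x s) (F.relabel x s)

theorem relabel_eq_zero_iff {x c : Fin N} : F.relabel x c = 0 ↔ c = 0 :=
  (F.relabel_involutive x).injective.eq_iff' (F.relabel_zero x)

theorem neighbor_returnSlot (x s : Fin N) : F.neighbor (F.neighbor x s) (F.returnSlot x s) = x := by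
  rw [neighbor, returnSlot, F.relabel_involutive, neighbor, F.step_involutive]

theorem returnSlot_returnSlot (x s : Fin N) :
    F.returnSlot (F.neighbor x s) (F.returnSlot x s) = s := by
  rw [returnSlot, neighbor_returnSlot, returnSlot, F.relabel_involutive, F.relabel_involutive]

theorem returnSlot_ne_zero {x s : Fin N} (hs : s ≠ 0) : F.returnSlot x s ≠ 0 := by
  rwa [returnSlot, Ne, relabel_eq_zero_iff, relabel_eq_zero_iff]

theorem neighbor_ne {x s : Fin N} (hs : s ≠ 0) : F.neighbor x s ≠ x := fun h =>
  hs (F.relabel_eq_zero_iff.mp (F.step_left_injective x (h.trans (F.step_zero x).symm)))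

theorem neighbor_injective (x : Fin N) : Function.Injective (F.neighbor x) :=
  (F.step_left_injective x).comp (F.relabel_involutive x).injective

theorem exists_neighbor_eq {x y : Fin N} (hxy : x ≠ y) :
    ∃ s, s ≠ 0 ∧ F.neighbor x s = y := by
  obtain ⟨s, hs⟩ := Finite.surjective_of_injective (F.neighbor_injective x) y
  refine ⟨s, fun h => hxy ?_, hs⟩
  rw [← hs, h, neighbor, F.relabel_zero, F.step_zero]

/-- Port `i` of `x` is slot `i + 1`, which uses the matching with code `relabel x (i + 1)`;
slot `0` is the trivial code and carries no edge. -/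
def next (x : Fin N) (i : ℕ) : Option (Fin N × ℕ) :=
  if h : i + 1 < N then some (F.neighbor x ⟨i + 1, h⟩, (F.returnSlot x ⟨i + 1, h⟩).val - 1)
  else none

theorem next_slot {x s : Fin N} (hs : s ≠ 0) :
    F.next x (s.val - 1) = some (F.neighbor x s, (F.returnSlot x s).val - 1) := by
  have hs' : s.val - 1 + 1 = s.val :=
    Nat.sub_add_cancel (Nat.pos_of_ne_zero (Fin.val_ne_zero_iff.mpr hs))
  rw [next, dif_pos (hs' ▸ s.isLt)]
  simp only [hs', Fin.eta]

theorem next_eq_some {x y : Fin N} {i j : ℕ} (h : F.next x i = some (y, j)) :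
    ∃ s : Fin N, s ≠ 0 ∧ s.val = i + 1 ∧ F.neighbor x s = y ∧
      (F.returnSlot x s).val = j + 1 := by
  unfold next at h
  split_ifs at h with hi
  obtain ⟨rfl, rfl⟩ := Prod.mk.inj (Option.some.inj h)
  have hs : (⟨i + 1, hi⟩ : Fin N) ≠ 0 := Fin.val_ne_zero_iff.mp (Nat.succ_ne_zero i)
  have := Fin.val_ne_zero_iff.mpr (F.returnSlot_ne_zero (x := x) hs)
  exact ⟨_, hs, rfl, rfl, by omega⟩

def toPortGraph : PortGraph (Fin N) where
  deg _ := N - 1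
  next := F.next
  next_isSome x i := by
    unfold next
    split_ifs with h <;> simp <;> omega
  next_symm x i y j h := by
    obtain ⟨s, hs, hsi, rfl, hj⟩ := F.next_eq_some h
    rw [show j = (F.returnSlot x s).val - 1 by omega, F.next_slot (F.returnSlot_ne_zero hs),
      neighbor_returnSlot, returnSlot_returnSlot, hsi, Nat.add_sub_cancel]
  next_ne x i y j h := by
    obtain ⟨s, hs, -, rfl, -⟩ := F.next_eq_some h
    exact F.neighbor_ne hs
  next_inj x i i' y j j' h h' := by
    obtain ⟨s, -, hsi, rfl, -⟩ := F.next_eq_some h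
    obtain ⟨s', -, hsi', hss', -⟩ := F.next_eq_some h'
    have := congrArg Fin.val (F.neighbor_injective x hss')
    omega
  connected u v := by
    rcases eq_or_ne u v with rfl | huv
    · exact .refl
    · obtain ⟨s, hs, rfl⟩ := F.exists_neighbor_eq huv
      exact .single ⟨_, _, F.next_slot hs⟩

theorem toSimpleGraph_eq_top : F.toPortGraph.toSimpleGraph = ⊤ := by
  ext x y
  refine ⟨fun ⟨i, j, h⟩ => (F.toPortGraph.next_ne x i y j h).symm, fun hxy => ?_⟩
  obtain ⟨s, hs, rfl⟩ := F.exists_neighbor_eq hxy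
  exact ⟨_, _, F.next_slot hs⟩

theorem viewEq_succ_iff {t : ℕ} {u v : Fin N} :
    F.toPortGraph.viewEq (t + 1) u v ↔
      ∀ s, s ≠ 0 → F.returnSlot u s = F.returnSlot v s ∧
        F.toPortGraph.viewEq t (F.neighbor u s) (F.neighbor v s) := by
  refine ⟨fun h s hs => ?_, fun h => ⟨rfl, fun i j j' u' v' hu hv => ?_⟩⟩
  · obtain ⟨hj, hview⟩ := h.2 _ _ _ _ _ (F.next_slot hs) (F.next_slot hs)
    have hu := Fin.val_ne_zero_iff.mpr (F.returnSlot_ne_zero (x := u) hs)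
    have hv := Fin.val_ne_zero_iff.mpr (F.returnSlot_ne_zero (x := v) hs)
    exact ⟨Fin.ext (by omega), hview⟩
  · obtain ⟨s, hs, hsi, rfl, hj⟩ := F.next_eq_some hu
    obtain ⟨s', -, hsi', rfl, hj'⟩ := F.next_eq_some hv
    obtain rfl : s = s' := Fin.ext (by omega)
    obtain ⟨hret, hview⟩ := h s hs
    rw [hret] at hj
    exact ⟨by omega, hview⟩

end CliqueFactorization

namespace Nat

theorem mod_two_pow_eq_iff {x y n : ℕ} :
    x % 2 ^ n = y % 2 ^ n ↔ ∀ i < n, x.testBit i = y.testBit i := by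
  refine ⟨fun h i hi => ?_, fun h => Nat.eq_of_testBit_eq fun i => ?_⟩
  · simpa [hi] using congrArg (Nat.testBit · i) h
  · by_cases hi : i < n <;> simp [hi, h]

theorem mod_two_pow_succ_eq_iff {x y n : ℕ} :
    x % 2 ^ (n + 1) = y % 2 ^ (n + 1) ↔
      x % 2 ^ n = y % 2 ^ n ∧ x.testBit n = y.testBit n := by
  simp only [mod_two_pow_eq_iff, Nat.lt_succ_iff_lt_or_eq, or_imp, forall_and, forall_eq]

theorem xor_mod_four (x y : ℕ) : (x ^^^ y) % 4 = (x % 4 ^^^ y) % 4 := by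
  rw [show (4 : ℕ) = 2 ^ 2 from rfl, Nat.xor_mod_two_pow, Nat.xor_mod_two_pow, Nat.mod_mod]

theorem mod_four_eq_of_mod_two_pow_eq {u v n : ℕ} (h : u % 2 ^ (n + 2) = v % 2 ^ (n + 2)) :
    u % 4 = v % 4 := by
  have hdvd : 4 ∣ 2 ^ (n + 2) := ⟨2 ^ n, by ring⟩
  rw [← Nat.mod_mod_of_dvd u hdvd, h, Nat.mod_mod_of_dvd v hdvd]

end Nat

namespace SymmetryClique

/-- The special codes: `special k false = 2 ^ k` and `special k true = 3 * 2 ^ k`. -/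
def special (k : ℕ) (b : Bool) : ℕ := 2 ^ k ^^^ bif b then 2 ^ (k + 1) else 0

theorem testBit_special (k : ℕ) (b : Bool) (i : ℕ) :
    (special k b).testBit i = (decide (i = k) || b && decide (i = k + 1)) := by
  by_cases hi : i = k
  · cases b <;> simp [special, hi]
  · cases b <;> simp [special, Nat.testBit_two_pow, hi, Ne.symm hi, eq_comm]

theorem special_lt (k : ℕ) (b : Bool) : special k b < 2 ^ (k + 2) := by
  refine Nat.xor_lt_two_pow (Nat.pow_lt_pow_right one_lt_two (by omega)) ?_
  cases b
  · exact Nat.two_pow_pos _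
  · exact Nat.pow_lt_pow_right one_lt_two (by omega)

theorem special_injective {k k' : ℕ} {b b' : Bool} (h : special k b = special k' b') :
    k = k' ∧ b = b' := by
  have hk := congrArg (Nat.testBit · k) h
  have hk' := congrArg (Nat.testBit · k') h
  simp only [testBit_special] at hk hk'
  obtain rfl : k = k' := by
    by_contra hne
    cases b <;> cases b' <;> simp at hk hk' <;> omega
  have hb := congrArg (Nat.testBit · (k + 1)) h
  simp only [testBit_special] at hb
  cases b <;> cases b' <;> simp_all

def IsSpecial (lam c : ℕ) : Prop := ∃ p : ℕ × Bool, p.1 + 2 ≤ lam ∧ c = special p.1 p.2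

theorem isSpecial_special {lam k : ℕ} (hk : k + 2 ≤ lam) (b : Bool) :
    IsSpecial lam (special k b) :=
  ⟨(k, b), hk, rfl⟩

theorem not_isSpecial_of_two_pow_le {lam c : ℕ} (hc : 2 ^ lam ≤ c) : ¬ IsSpecial lam c := by
  rintro ⟨⟨k, b⟩, hk, rfl⟩
  exact absurd ((special_lt k b).trans_le (Nat.pow_le_pow_right two_pos hk)) hc.not_gt

theorem not_isSpecial_zero (lam : ℕ) : ¬ IsSpecial lam 0 := by
  rintro ⟨⟨k, b⟩, -, h⟩
  have := congrArg (Nat.testBit · k) h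
  simp [testBit_special] at this

/-- The matching with code `c` joins `x` to `x ^^^ mask lam c x`.  For the special codes
`2 ^ k` and `3 * 2 ^ k` the mask is one of these two, chosen by bit `k + 2` of `x`; this bit
is unchanged along the edge, so the map is still an involution. -/
noncomputable def mask (lam c x : ℕ) : ℕ :=
  open Classical in
  if h : IsSpecial lam c then special h.choose.1 (h.choose.2 ^^ x.testBit (h.choose.1 + 2))
  else c

theorem mask_special {lam k : ℕ} (hk : k + 2 ≤ lam) (b : Bool) (x : ℕ) :
    mask lam (special k b) x = special k (b ^^ x.testBit (k + 2)) := by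
  have h := isSpecial_special hk b
  obtain ⟨hk', hb'⟩ := special_injective h.choose_spec.2.symm
  rw [mask, dif_pos h, hk', hb']

theorem mask_of_not_isSpecial {lam c : ℕ} (h : ¬ IsSpecial lam c) (x : ℕ) : mask lam c x = c :=
  dif_neg h

theorem mask_zero (lam x : ℕ) : mask lam 0 x = 0 :=
  mask_of_not_isSpecial (not_isSpecial_zero lam) x

theorem mask_lt {lam c : ℕ} (hc : c < 2 ^ (lam + 1)) (x : ℕ) :
    mask lam c x < 2 ^ (lam + 1) := by
  by_cases h : IsSpecial lam c
  · obtain ⟨⟨k, b⟩, hk, rfl⟩ := h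
    rw [mask_special hk]
    exact (special_lt _ _).trans_le (Nat.pow_le_pow_right two_pos (by omega))
  · rwa [mask_of_not_isSpecial h]

theorem mask_left_injective (lam x : ℕ) : Function.Injective (mask lam · x) := by
  intro c c' hcc'
  simp only at hcc'
  by_cases h : IsSpecial lam c <;> by_cases h' : IsSpecial lam c'
  · obtain ⟨⟨k, b⟩, hk, rfl⟩ := h
    obtain ⟨⟨k', b'⟩, hk', rfl⟩ := h'
    rw [mask_special hk, mask_special hk'] at hcc'
    obtain ⟨rfl, hb⟩ := special_injective hcc'
    simp only at hb
    rw [Bool.xor_left_inj.mp hb]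
  · obtain ⟨⟨k, b⟩, hk, rfl⟩ := h
    rw [mask_special hk, mask_of_not_isSpecial h'] at hcc'
    exact absurd (hcc' ▸ isSpecial_special hk _) h'
  · obtain ⟨⟨k', b'⟩, hk', rfl⟩ := h'
    rw [mask_special hk', mask_of_not_isSpecial h] at hcc'
    exact absurd (hcc' ▸ isSpecial_special hk' _) h
  · rwa [mask_of_not_isSpecial h, mask_of_not_isSpecial h'] at hcc'

theorem mask_xor_mask (lam c x : ℕ) : mask lam c (x ^^^ mask lam c x) = mask lam c x := by
  by_cases h : IsSpecial lam c
  · obtain ⟨⟨k, b⟩, hk, rfl⟩ := h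
    simp [mask_special hk, testBit_special]
  · simp only [mask_of_not_isSpecial h]

theorem mask_mod_eq {lam c u v n : ℕ} (h : u % 2 ^ (n + 1) = v % 2 ^ (n + 1)) :
    mask lam c u % 2 ^ n = mask lam c v % 2 ^ n := by
  by_cases hc : IsSpecial lam c
  · obtain ⟨⟨k, b⟩, hk, rfl⟩ := hc
    rw [mask_special hk, mask_special hk, Nat.mod_two_pow_eq_iff]
    intro i hi
    rcases lt_or_ge (k + 2) (n + 1) with hkn | hkn
    · rw [Nat.mod_two_pow_eq_iff.mp h (k + 2) hkn]
    · simp only [testBit_special]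
      grind
  · simp only [mask_of_not_isSpecial hc]

def IsPlain (lam c : ℕ) : Prop := c ≠ 0 ∧ ¬ IsSpecial lam c

noncomputable def swapCode (lam w c : ℕ) : ℕ :=
  open Classical in
  if IsPlain lam c ∧ IsPlain lam (c ^^^ w) then c ^^^ w else c

theorem swapCode_of_not_isPlain {lam w c : ℕ} (h : ¬ IsPlain lam c) : swapCode lam w c = c :=
  if_neg fun h' => h h'.1

theorem swapCode_zero (lam w : ℕ) : swapCode lam w 0 = 0 :=
  swapCode_of_not_isPlain fun h => h.1 rfl

theorem swapCode_swapCode (lam w c : ℕ) : swapCode lam w (swapCode lam w c) = c := by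
  by_cases h : IsPlain lam c ∧ IsPlain lam (c ^^^ w)
  · have h' : IsPlain lam (c ^^^ w) ∧ IsPlain lam (c ^^^ w ^^^ w) := by
      rwa [xor_cancel_right, and_comm]
    rw [show swapCode lam w c = c ^^^ w from if_pos h, swapCode, if_pos h', xor_cancel_right]
  · rw [show swapCode lam w c = c from if_neg h, swapCode, if_neg h]

theorem swapCode_lt {lam w c n : ℕ} (hc : c < 2 ^ n) (hw : w < 2 ^ n) :
    swapCode lam w c < 2 ^ n := by
  unfold swapCode
  split_ifs
  · exact Nat.xor_lt_two_pow hc hw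
  · exact hc


theorem isPlain_of_two_pow_le {lam c : ℕ} (hc : 2 ^ lam ≤ c) : IsPlain lam c :=
  ⟨(Nat.two_pow_pos lam).trans_le hc |>.ne', not_isSpecial_of_two_pow_le hc⟩

theorem swapCode_zero_left (lam c : ℕ) : swapCode lam 0 c = c := by
  simp [swapCode]

theorem swapCode_one (w c : ℕ) :
    swapCode 1 w c = if c ≠ 0 ∧ c ^^^ w ≠ 0 then c ^^^ w else c := by
  have : ∀ c, ¬ IsSpecial 1 c := fun c ⟨_, hk, _⟩ => by omega
  simp [swapCode, IsPlain, this]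

noncomputable def factorization (lam : ℕ) : CliqueFactorization (2 ^ (lam + 1)) where
  step c x := ⟨x ^^^ mask lam c x, Nat.xor_lt_two_pow x.isLt (mask_lt c.isLt x)⟩
  relabel x c :=
    ⟨swapCode lam (x.val % 4) c, swapCode_lt c.isLt ((Nat.mod_le _ _).trans_lt x.isLt)⟩
  step_zero x := Fin.ext (by simp [mask_zero])
  step_involutive c x := Fin.ext (by simp [mask_xor_mask])
  step_left_injective x c c' h :=
    Fin.ext (mask_left_injective lam x (Nat.xor_right_injective (congrArg Fin.val h)))
  relabel_involutive x c := Fin.ext (swapCode_swapCode _ _ _)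
  relabel_zero x := Fin.ext (swapCode_zero _ _)

variable {lam : ℕ}

/-- The code of the return port of slot `s` at a vertex whose two lowest bits are `w`. -/
noncomputable def returnCode (lam w s : ℕ) : ℕ :=
  swapCode lam ((w ^^^ swapCode lam w s) % 4) (swapCode lam w s)

theorem val_returnSlot (x s : Fin (2 ^ (lam + 1))) :
    ((factorization lam).returnSlot x s).val = returnCode lam (x.val % 4) s.val := by
  set c := swapCode lam (x.val % 4) s.val
  change swapCode lam ((x.val ^^^ mask lam c x.val) % 4) c = _
  by_cases hc : IsPlain lam c
  · rw [mask_of_not_isSpecial hc.2, Nat.xor_mod_four, returnCode]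
  · rw [swapCode_of_not_isPlain hc, returnCode, swapCode_of_not_isPlain hc]

theorem returnSlot_eq_of_mod_four_eq {u v : Fin (2 ^ (lam + 1))} (h : u.val % 4 = v.val % 4)
    (s : Fin (2 ^ (lam + 1))) :
    (factorization lam).returnSlot u s = (factorization lam).returnSlot v s :=
  Fin.ext (by rw [val_returnSlot, val_returnSlot, h])

theorem returnCode_two_pow (hlam : 2 ≤ lam) {w : ℕ} (hw : w < 4) :
    returnCode lam w (2 ^ lam) = 2 ^ lam ^^^ w := by
  have h4 : 4 ∣ 2 ^ lam := pow_dvd_pow 2 hlam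
  have hplain : IsPlain lam (2 ^ lam ^^^ w) :=
    isPlain_of_two_pow_le <| Nat.ge_two_pow_of_testBit <| by
      simp [Nat.testBit_lt_two_pow (hw.trans_le (Nat.le_of_dvd (Nat.two_pow_pos _) h4))]
  have hswap : swapCode lam w (2 ^ lam) = 2 ^ lam ^^^ w :=
    if_pos ⟨isPlain_of_two_pow_le le_rfl, hplain⟩
  rw [returnCode, hswap, Nat.xor_comm (2 ^ lam), xor_cancel_left, Nat.mod_eq_zero_of_dvd h4,
    swapCode_zero_left]

theorem returnCode_one_injective {w w' : ℕ} (hw : w < 4) (hw' : w' < 4)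
    (h2 : returnCode 1 w 2 = returnCode 1 w' 2) (h3 : returnCode 1 w 3 = returnCode 1 w' 3) :
    w = w' := by
  simp only [returnCode, swapCode_one] at h2 h3
  interval_cases w <;> interval_cases w' <;> revert h2 h3 <;> decide

theorem mod_four_eq_of_returnSlot_eq (hlam : 1 ≤ lam) {u v : Fin (2 ^ (lam + 1))}
    (h : ∀ s, s ≠ 0 →
      (factorization lam).returnSlot u s = (factorization lam).returnSlot v s) :
    u.val % 4 = v.val % 4 := by
  have hret (s : ℕ) (hs0 : s ≠ 0) (hs : s < 2 ^ (lam + 1)) :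
      returnCode lam (u.val % 4) s = returnCode lam (v.val % 4) s := by
    rw [← val_returnSlot u ⟨s, hs⟩, ← val_returnSlot v ⟨s, hs⟩,
      h _ (Fin.val_ne_zero_iff.mp hs0)]
  rcases hlam.eq_or_lt with rfl | hlam
  · exact returnCode_one_injective (Nat.mod_lt _ (by norm_num)) (Nat.mod_lt _ (by norm_num))
      (hret 2 (by norm_num) (by norm_num)) (hret 3 (by norm_num) (by norm_num))
  · have := hret (2 ^ lam) (Nat.two_pow_pos lam).ne' (Nat.pow_lt_pow_right one_lt_two (by omega))
    rw [returnCode_two_pow hlam (Nat.mod_lt _ (by norm_num)),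
      returnCode_two_pow hlam (Nat.mod_lt _ (by norm_num))] at this
    exact Nat.xor_right_injective this

theorem viewEq_one_iff (hlam : 1 ≤ lam) {u v : Fin (2 ^ (lam + 1))} :
    (factorization lam).toPortGraph.viewEq 1 u v ↔ u.val % 4 = v.val % 4 := by
  rw [CliqueFactorization.viewEq_succ_iff]
  exact ⟨fun h => mod_four_eq_of_returnSlot_eq hlam fun s hs => (h s hs).1,
    fun h s _ => ⟨returnSlot_eq_of_mod_four_eq h s, rfl⟩⟩

theorem neighbor_mod_eq {n : ℕ} {u v : Fin (2 ^ (lam + 1))}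
    (h : u.val % 2 ^ (n + 2) = v.val % 2 ^ (n + 2)) (s : Fin (2 ^ (lam + 1))) :
    ((factorization lam).neighbor u s).val % 2 ^ (n + 1) =
      ((factorization lam).neighbor v s).val % 2 ^ (n + 1) := by
  have hcode : (factorization lam).relabel u s = (factorization lam).relabel v s :=
    Fin.ext (congrArg (swapCode lam · s.val) (Nat.mod_four_eq_of_mod_two_pow_eq h))
  change (u.val ^^^ mask lam _ u.val) % _ = (v.val ^^^ mask lam _ v.val) % _
  rw [hcode, Nat.xor_mod_two_pow, Nat.xor_mod_two_pow, mask_mod_eq h,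
    (Nat.mod_two_pow_succ_eq_iff.mp h).1]

def specialSlot {k : ℕ} (hk : k + 2 ≤ lam) : Fin (2 ^ (lam + 1)) :=
  ⟨special k false, (special_lt k false).trans_le (Nat.pow_le_pow_right two_pos (by omega))⟩

theorem specialSlot_ne_zero {k : ℕ} (hk : k + 2 ≤ lam) : specialSlot hk ≠ 0 :=
  Fin.val_ne_zero_iff.mp fun h => not_isSpecial_zero lam (h ▸ isSpecial_special hk false)

theorem testBit_neighbor_specialSlot {k : ℕ} (hk : k + 2 ≤ lam) (x : Fin (2 ^ (lam + 1))) :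
    ((factorization lam).neighbor x (specialSlot hk)).val.testBit (k + 1) =
      (x.val.testBit (k + 1) ^^ x.val.testBit (k + 2)) := by
  have hcode : swapCode lam (x.val % 4) (special k false) = special k false :=
    swapCode_of_not_isPlain fun h => h.2 (isSpecial_special hk false)
  change (x.val ^^^ mask lam (swapCode lam (x.val % 4) (special k false)) x.val).testBit _ = _
  rw [hcode, mask_special hk, Nat.testBit_xor, testBit_special]
  simp

theorem viewEq_succ_iff_mod_eq {t : ℕ} (ht : t + 1 ≤ lam) (u v : Fin (2 ^ (lam + 1))) :
    (factorization lam).toPortGraph.viewEq (t + 1) u v ↔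
      u.val % 2 ^ (t + 2) = v.val % 2 ^ (t + 2) := by
  induction t generalizing u v with
  | zero => exact viewEq_one_iff ht
  | succ t ih =>
    have ih := ih (by omega)
    refine ⟨fun h => ?_, fun h => ?_⟩
    · have hlow := (ih u v).mp ((factorization lam).toPortGraph.viewEq_of_succ h)
      have hnbr := Nat.mod_two_pow_succ_eq_iff.mp <| (ih _ _).mp
        ((CliqueFactorization.viewEq_succ_iff _).mp h _ (specialSlot_ne_zero ht)).2
      rw [testBit_neighbor_specialSlot, testBit_neighbor_specialSlot,
        (Nat.mod_two_pow_succ_eq_iff.mp hlow).2, Bool.xor_right_inj] at hnbr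
      exact Nat.mod_two_pow_succ_eq_iff.mpr ⟨hlow, hnbr.2⟩
    · refine (CliqueFactorization.viewEq_succ_iff _).mpr fun s _ => ⟨?_, (ih _ _).mpr ?_⟩
      · exact returnSlot_eq_of_mod_four_eq (Nat.mod_four_eq_of_mod_two_pow_eq h) s
      · exact neighbor_mod_eq h s

theorem eq_of_viewEq (hlam : 1 ≤ lam) {u v : Fin (2 ^ (lam + 1))}
    (h : (factorization lam).toPortGraph.viewEq lam u v) : u = v := by
  obtain ⟨t, rfl⟩ := Nat.exists_eq_add_of_le' hlam
  have := (viewEq_succ_iff_mod_eq le_rfl u v).mp h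
  rwa [Nat.mod_eq_of_lt u.isLt, Nat.mod_eq_of_lt v.isLt, ← Fin.ext_iff] at this

def twin (v : Fin (2 ^ (lam + 1))) : Fin (2 ^ (lam + 1)) :=
  ⟨v.val ^^^ 2 ^ lam, Nat.xor_lt_two_pow v.isLt (Nat.pow_lt_pow_right one_lt_two (by omega))⟩

theorem twin_ne (v : Fin (2 ^ (lam + 1))) : twin v ≠ v := fun h => by
  have := congrArg (v.val ^^^ ·) (congrArg Fin.val h)
  simp [twin] at this

theorem viewEq_twin (hlam : 1 ≤ lam) (v : Fin (2 ^ (lam + 1))) :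
    (factorization lam).toPortGraph.viewEq (lam - 1) (twin v) v := by
  rcases hlam.eq_or_lt with rfl | hlam
  · rfl
  · obtain ⟨t, rfl⟩ := Nat.exists_eq_add_of_le' hlam
    refine (viewEq_succ_iff_mod_eq (by omega) _ _).mpr ?_
    simp [twin, Nat.xor_mod_two_pow]

end SymmetryClique

/-- (Lemma 3.1, existential form) For every `λ ≥ 1` there is a port numbering of the
complete graph on `2^{λ+1}` vertices such that all vertices have pairwise distinct views
at depth `λ` (in particular, all infinite views are pairwise distinct), while no vertex
has a unique view at depth `λ - 1`; hence this clique has level of symmetry exactly `λ`. -/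
theorem exists_clique_levelOfSymmetry (lam : ℕ) (hlam : 1 ≤ lam) :
    ∃ P : PortGraph (Fin (2 ^ (lam + 1))),
      P.toSimpleGraph = ⊤ ∧
      (∀ u v : Fin (2 ^ (lam + 1)), P.viewEq lam u v → u = v) ∧
      (∀ u v : Fin (2 ^ (lam + 1)), P.ViewEq u v → u = v) ∧
      (∀ v : Fin (2 ^ (lam + 1)), ∃ u : Fin (2 ^ (lam + 1)),
        u ≠ v ∧ P.viewEq (lam - 1) u v) ∧
      IsLeast {t : ℕ | P.SymAt t} lam := by
  let F := SymmetryClique.factorization lam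
  have hsep : ∀ u v, F.toPortGraph.viewEq lam u v → u = v :=
    fun _ _ => SymmetryClique.eq_of_viewEq hlam
  have htwin : ∀ v, ∃ u, u ≠ v ∧ F.toPortGraph.viewEq (lam - 1) u v :=
    fun v => ⟨_, SymmetryClique.twin_ne v, SymmetryClique.viewEq_twin hlam v⟩
  exact ⟨F.toPortGraph, F.toSimpleGraph_eq_top, hsep, fun u v h => hsep u v (h lam), htwin,
    F.toPortGraph.isLeast_symAt hsep htwin⟩
end
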